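/- Let M ∈ GL(2,ℝ) and Λ = Mℤ² a lattice in ℝ². Then for every c > 0 and every z ∈ ℝ²: Σ_{λ∈Λ} e^{−c‖λ+z‖²} ≤ Σ_{λ∈Λ} e^{−c‖λ‖²}. (The heat kernel on the torus ℝ²/Λ attains its maximal temperature at the lattice points.) -/

import Mathlib

/-!
Write `M = !![A, B; C, D]` and `z = M y`. Completing the square turns `c ‖M x‖²` into
`γ s² + α (t + β s)²` with `α, γ > 0`. Poisson summation, first in the second and
then in the first coordinate, expands `y ↦ Σ_n exp (-(γ (n₁ + y₁)² + α (n₂ + y₂ + β (n₁ + y₁))²))`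
as a Fourier series on `ℝ² / ℤ²` whose coefficients
`√(π/α) √(π/γ) exp (-(π² m² / α + π² (k - β m)² / γ))` are positive. By the triangle inequality
its absolute value is at most the sum of the coefficients, which is its value at `y = 0`.
-/

noncomputable section

/-- The point of the lattice `Mℤ²` indexed by `n ∈ ℤ²`. -/
def latticePt (M : Matrix (Fin 2) (Fin 2) ℝ) (n : ℤ × ℤ) : ℝ × ℝ :=
  (M.mulVec ![(n.1 : ℝ), (n.2 : ℝ)] 0, M.mulVec ![(n.1 : ℝ), (n.2 : ℝ)] 1)

open Real Complex

lemma tsum_exp_neg_mul_add_sq_mul_cexp {g : ℝ} (hg : 0 < g) (θ y : ℝ) :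
    ∑' n : ℤ, rexp (-g * (n + y) ^ 2) * cexp (2 * π * I * θ * (n + y)) =
      √(π / g) * ∑' m : ℤ, rexp (-(π ^ 2 / g) * (m - θ) ^ 2) * cexp (2 * π * I * m * y) := by
  have hπ : (π : ℂ) ≠ 0 := ofReal_ne_zero.mpr pi_ne_zero
  have hg' : (g : ℂ) ≠ 0 := ofReal_ne_zero.mpr hg.ne'
  have ha : 0 < ((g / π : ℝ) : ℂ).re := by rw [ofReal_re]; positivity
  have hsqrt : 1 / ((g / π : ℝ) : ℂ) ^ (1 / 2 : ℂ) = √(π / g) := by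
    rw [← ofReal_one, ← ofReal_ofNat, ← ofReal_div, ← ofReal_cpow (by positivity), ← ofReal_div,
      sqrt_eq_rpow, one_div (_ ^ _), ← inv_rpow (by positivity), inv_div]
  -- Jacobi's transformation with `a = g / π`, `b = -g y / π + i θ`, both sides multiplied by `C`.
  set C := cexp (g * y ^ 2 - 2 * π * I * θ * y)
  set b : ℂ := (-(g * y) / π : ℝ) + I * θ
  have hL (n : ℤ) : cexp (-π * ((g / π : ℝ) : ℂ) * n ^ 2 + 2 * π * b * n) =
      C * (rexp (-g * (n + y) ^ 2) * cexp (2 * π * I * θ * (n + y))) := by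
    rw [ofReal_exp, ← Complex.exp_add, ← Complex.exp_add]
    congr 1
    simp only [b]
    push_cast
    field_simp
    ring
  have hR (n : ℤ) : cexp (-π / ((g / π : ℝ) : ℂ) * (n + I * b) ^ 2) =
      C * (rexp (-(π ^ 2 / g) * (n - θ) ^ 2) * cexp (2 * π * I * n * y)) := by
    rw [ofReal_exp, ← Complex.exp_add, ← Complex.exp_add]
    congr 1
    simp only [b]
    push_cast
    field_simp
    ring_nf
    simp only [I_sq, I_pow_three, I_pow_four]
    ring_nf
  have key := Complex.tsum_exp_neg_quadratic ha b
  rw [tsum_congr hL, tsum_congr hR, tsum_mul_left, tsum_mul_left, hsqrt, mul_left_comm] at key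
  exact mul_left_cancel₀ (exp_ne_zero _) key

lemma summable_exp_neg_mul_add_sq {g : ℝ} (hg : 0 < g) (y : ℝ) :
    Summable fun n : ℤ => rexp (-g * (n + y) ^ 2) := by
  have hτ : 0 < (((g / π : ℝ) : ℂ) * I).im := by simpa using div_pos hg pi_pos
  refine (((summable_jacobiTheta₂_term_iff (((g * y / π : ℝ) : ℂ) * I) _).mpr hτ).norm.mul_left
    (rexp (-g * y ^ 2))).congr fun n => ?_
  rw [norm_jacobiTheta₂_term, ← Real.exp_add]
  simp only [mul_I_im, ofReal_re]
  congr 1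
  field_simp
  ring

lemma norm_cexp_two_pi_I_mul_int_mul (m : ℤ) (y : ℝ) : ‖cexp (2 * π * I * m * y)‖ = 1 := by
  simp [norm_exp]

lemma le_mul_tsum_of_eq_mul_tsum_unimodular {ι : Type*} {c : ι → ℝ} (hc : ∀ i, 0 ≤ c i)
    (hs : Summable c) {u : ι → ℂ} (hu : ∀ i, ‖u i‖ = 1) {K a : ℝ} (hK : 0 ≤ K)
    (ha : (a : ℂ) = K * ∑' i, c i * u i) : a ≤ K * ∑' i, c i := by
  have hnorm (i : ι) : ‖(c i : ℂ) * u i‖ = c i := by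
    rw [norm_mul, hu, mul_one, norm_real, Real.norm_of_nonneg (hc i)]
  calc a ≤ ‖(a : ℂ)‖ := by rw [norm_real]; exact le_norm_self a
    _ = K * ‖∑' i, c i * u i‖ := by rw [ha, norm_mul, norm_real, Real.norm_of_nonneg hK]
    _ ≤ K * ∑' i, c i := by
      gcongr
      simpa only [hnorm] using norm_tsum_le_tsum_norm (hs.congr fun i => (hnorm i).symm)

lemma ofReal_tsum_exp_neg_mul_add_sq {g : ℝ} (hg : 0 < g) (y : ℝ) :
    ((∑' n : ℤ, rexp (-g * (n + y) ^ 2) : ℝ) : ℂ) =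
      √(π / g) * ∑' m : ℤ, rexp (-(π ^ 2 / g) * m ^ 2) * cexp (2 * π * I * m * y) := by
  simpa [ofReal_tsum] using tsum_exp_neg_mul_add_sq_mul_cexp hg 0 y

lemma tsum_exp_neg_mul_sq_eq {g : ℝ} (hg : 0 < g) :
    ∑' n : ℤ, rexp (-g * n ^ 2) = √(π / g) * ∑' m : ℤ, rexp (-(π ^ 2 / g) * m ^ 2) := by
  have h := ofReal_tsum_exp_neg_mul_add_sq hg 0
  simp only [add_zero, ofReal_zero, mul_zero, Complex.exp_zero, mul_one] at h
  exact_mod_cast h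

lemma tsum_exp_neg_mul_add_sq_le {g : ℝ} (hg : 0 < g) (y : ℝ) :
    ∑' n : ℤ, rexp (-g * (n + y) ^ 2) ≤ ∑' n : ℤ, rexp (-g * n ^ 2) := by
  rw [tsum_exp_neg_mul_sq_eq hg]
  refine le_mul_tsum_of_eq_mul_tsum_unimodular (fun _ => (exp_pos _).le)
    (by simpa using summable_exp_neg_mul_add_sq (by positivity : 0 < π ^ 2 / g) 0)
    (fun m => norm_cexp_two_pi_I_mul_int_mul m y) (sqrt_nonneg _)
    (ofReal_tsum_exp_neg_mul_add_sq hg y)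

lemma summable_exp_neg_sheared {α γ : ℝ} (hα : 0 < α) (hγ : 0 < γ) (β y₁ y₂ : ℝ) :
    Summable fun n : ℤ × ℤ =>
      rexp (-(γ * (n.1 + y₁) ^ 2 + α * (n.2 + y₂ + β * (n.1 + y₁)) ^ 2)) := by
  have hsplit (n : ℤ × ℤ) : rexp (-(γ * (n.1 + y₁) ^ 2 + α * (n.2 + y₂ + β * (n.1 + y₁)) ^ 2)) =
      rexp (-γ * (n.1 + y₁) ^ 2) * rexp (-α * (n.2 + (y₂ + β * (n.1 + y₁))) ^ 2) := by
    rw [← Real.exp_add]; congr 1; ring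
  simp_rw [hsplit]
  refine (summable_prod_of_nonneg fun _ => by positivity).mpr
    ⟨fun a => (summable_exp_neg_mul_add_sq hα (y₂ + β * (a + y₁))).mul_left
      (rexp (-γ * (a + y₁) ^ 2)), ?_⟩
  refine Summable.of_nonneg_of_le (fun _ => by positivity) (fun a => ?_)
    ((summable_exp_neg_mul_add_sq hγ y₁).mul_right (∑' b : ℤ, rexp (-α * b ^ 2)))
  dsimp only
  rw [tsum_mul_left]
  exact mul_le_mul_of_nonneg_left (tsum_exp_neg_mul_add_sq_le hα _) (exp_pos _).le

lemma summable_exp_neg_sheared_dual {α γ : ℝ} (hα : 0 < α) (hγ : 0 < γ) (β : ℝ) :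
    Summable fun p : ℤ × ℤ => rexp (-(π ^ 2 / α * p.1 ^ 2 + π ^ 2 / γ * (p.2 - β * p.1) ^ 2)) :=
  (summable_exp_neg_sheared (by positivity : 0 < π ^ 2 / γ) (by positivity : 0 < π ^ 2 / α)
    (-β) 0 0).congr fun p => by simp only [add_zero, neg_mul, ← sub_eq_add_neg]

lemma ofReal_tsum_exp_neg_sheared_row {α : ℝ} (hα : 0 < α) (β γ y₁ y₂ : ℝ) (a : ℤ) :
    ((∑' b : ℤ, rexp (-(γ * (a + y₁) ^ 2 + α * (b + y₂ + β * (a + y₁)) ^ 2)) : ℝ) : ℂ) =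
      √(π / α) * ∑' m : ℤ, rexp (-(π ^ 2 / α) * m ^ 2) * cexp (2 * π * I * m * y₂) *
        (rexp (-γ * (a + y₁) ^ 2) * cexp (2 * π * I * (β * m : ℝ) * (a + y₁))) := by
  have hsplit (b : ℤ) : rexp (-(γ * (a + y₁) ^ 2 + α * (b + y₂ + β * (a + y₁)) ^ 2)) =
      rexp (-γ * (a + y₁) ^ 2) * rexp (-α * (b + (y₂ + β * (a + y₁))) ^ 2) := by
    rw [← Real.exp_add]; congr 1; ring
  rw [tsum_congr hsplit, tsum_mul_left, ofReal_mul, ofReal_tsum_exp_neg_mul_add_sq hα,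
    mul_left_comm, ← tsum_mul_left (a := ((rexp _ : ℝ) : ℂ))]
  congr 1
  refine tsum_congr fun m => ?_
  have hphase : cexp (2 * π * I * m * ((y₂ + β * (a + y₁) : ℝ) : ℂ)) =
      cexp (2 * π * I * m * y₂) * cexp (2 * π * I * (β * m : ℝ) * (a + y₁)) := by
    rw [← Complex.exp_add]; congr 1; push_cast; ring
  rw [hphase]
  ring

lemma ofReal_tsum_exp_neg_sheared {α γ : ℝ} (hα : 0 < α) (hγ : 0 < γ) (β y₁ y₂ : ℝ) :
    ((∑' n : ℤ × ℤ, rexp (-(γ * (n.1 + y₁) ^ 2 + α * (n.2 + y₂ + β * (n.1 + y₁)) ^ 2)) : ℝ) : ℂ)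
      = √(π / α) * √(π / γ) * ∑' p : ℤ × ℤ,
          rexp (-(π ^ 2 / α * p.1 ^ 2 + π ^ 2 / γ * (p.2 - β * p.1) ^ 2)) *
            (cexp (2 * π * I * p.1 * y₂) * cexp (2 * π * I * p.2 * y₁)) := by
  set s : ℤ → ℝ := fun m => rexp (-(π ^ 2 / α) * m ^ 2)
  set d : ℤ → ℤ → ℝ := fun m k => rexp (-(π ^ 2 / γ) * (k - β * m) ^ 2)
  have hcoeff (m k : ℤ) : rexp (-(π ^ 2 / α * m ^ 2 + π ^ 2 / γ * (k - β * m) ^ 2)) =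
      s m * d m k := by
    simp only [s, d]; rw [← Real.exp_add]; congr 1; ring
  have hprod : Summable fun p : ℤ × ℤ =>
      (rexp (-(π ^ 2 / α * p.1 ^ 2 + π ^ 2 / γ * (p.2 - β * p.1) ^ 2)) : ℂ) *
        (cexp (2 * π * I * p.1 * y₂) * cexp (2 * π * I * p.2 * y₁)) := by
    refine Summable.of_norm ((summable_exp_neg_sheared_dual hα hγ β).congr fun p => ?_)
    rw [norm_mul, norm_mul, norm_real, Real.norm_of_nonneg (exp_pos _).le,
      norm_cexp_two_pi_I_mul_int_mul, norm_cexp_two_pi_I_mul_int_mul, mul_one, mul_one]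
  have hswap : Summable (Function.uncurry fun (a m : ℤ) => (s m : ℂ) * cexp (2 * π * I * m * y₂) *
      (rexp (-γ * (a + y₁) ^ 2) * cexp (2 * π * I * (β * m : ℝ) * (a + y₁)))) := by
    refine Summable.of_norm (((summable_exp_neg_mul_add_sq hγ y₁).mul_of_nonneg
      (summable_exp_neg_mul_add_sq (by positivity : 0 < π ^ 2 / α) 0) (fun _ => by positivity)
      (fun _ => by positivity)).congr fun p => ?_)
    have hphase : ‖cexp (2 * π * I * (β * p.2 : ℝ) * (p.1 + y₁))‖ = 1 := by simp [norm_exp]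
    simp only [Function.uncurry, norm_mul, norm_real, Real.norm_of_nonneg (exp_pos _).le, s,
      norm_cexp_two_pi_I_mul_int_mul, hphase, add_zero]
    ring
  calc _ = ∑' a : ℤ, ((∑' b : ℤ,
          rexp (-(γ * (a + y₁) ^ 2 + α * (b + y₂ + β * (a + y₁)) ^ 2)) : ℝ) : ℂ) := by
        rw [(summable_exp_neg_sheared hα hγ β y₁ y₂).tsum_prod, ofReal_tsum]
    _ = √(π / α) * ∑' m : ℤ, ∑' a : ℤ, (s m : ℂ) * cexp (2 * π * I * m * y₂) *
          (rexp (-γ * (a + y₁) ^ 2) * cexp (2 * π * I * (β * m : ℝ) * (a + y₁))) := by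
        simp_rw [ofReal_tsum_exp_neg_sheared_row hα]
        rw [tsum_mul_left, hswap.tsum_comm]
    _ = √(π / α) * ∑' m : ℤ, (s m : ℂ) * cexp (2 * π * I * m * y₂) *
          (√(π / γ) * ∑' k : ℤ, d m k * cexp (2 * π * I * k * y₁)) := by
        congr 1
        refine tsum_congr fun m => ?_
        rw [tsum_mul_left, tsum_exp_neg_mul_add_sq_mul_cexp hγ]
    _ = _ := by
        rw [hprod.tsum_prod]
        simp only [← tsum_mul_left]
        refine tsum_congr fun m => tsum_congr fun k => ?_
        rw [hcoeff, ofReal_mul]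
        ring

lemma tsum_exp_neg_sheared_le {α γ : ℝ} (hα : 0 < α) (hγ : 0 < γ) (β y₁ y₂ : ℝ) :
    ∑' n : ℤ × ℤ, rexp (-(γ * (n.1 + y₁) ^ 2 + α * (n.2 + y₂ + β * (n.1 + y₁)) ^ 2)) ≤
      ∑' n : ℤ × ℤ, rexp (-(γ * n.1 ^ 2 + α * (n.2 + β * n.1) ^ 2)) := by
  have hzero : ∑' n : ℤ × ℤ, rexp (-(γ * n.1 ^ 2 + α * (n.2 + β * n.1) ^ 2)) =
      √(π / α) * √(π / γ) *
        ∑' p : ℤ × ℤ, rexp (-(π ^ 2 / α * p.1 ^ 2 + π ^ 2 / γ * (p.2 - β * p.1) ^ 2)) := by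
    have h := ofReal_tsum_exp_neg_sheared hα hγ β 0 0
    simp only [add_zero, ofReal_zero, mul_zero, Complex.exp_zero, mul_one] at h
    exact_mod_cast h
  rw [hzero]
  refine le_mul_tsum_of_eq_mul_tsum_unimodular (fun _ => (exp_pos _).le)
    (summable_exp_neg_sheared_dual hα hγ β) (fun p => ?_) (by positivity)
    (by rw [ofReal_mul]; exact ofReal_tsum_exp_neg_sheared hα hγ β y₁ y₂)
  rw [norm_mul, norm_cexp_two_pi_I_mul_int_mul, norm_cexp_two_pi_I_mul_int_mul, one_mul]

lemma mul_sq_add_sq_eq_sheared {A B C D : ℝ} (h : B ^ 2 + D ^ 2 ≠ 0) (c s t : ℝ) :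
    c * ((A * s + B * t) ^ 2 + (C * s + D * t) ^ 2) =
      c * (A * D - B * C) ^ 2 / (B ^ 2 + D ^ 2) * s ^ 2 +
        c * (B ^ 2 + D ^ 2) * (t + (A * B + C * D) / (B ^ 2 + D ^ 2) * s) ^ 2 := by
  field_simp
  ring

lemma tsum_exp_neg_mul_sq_add_sq_add_le {A B C D c : ℝ} (hdet : A * D - B * C ≠ 0)
    (hc : 0 < c) (z₁ z₂ : ℝ) :
    ∑' n : ℤ × ℤ, rexp (-c * ((A * n.1 + B * n.2 + z₁) ^ 2 + (C * n.1 + D * n.2 + z₂) ^ 2)) ≤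
      ∑' n : ℤ × ℤ, rexp (-c * ((A * n.1 + B * n.2) ^ 2 + (C * n.1 + D * n.2) ^ 2)) := by
  have hBD : 0 < B ^ 2 + D ^ 2 := by
    rcases eq_or_ne B 0 with hB | hB
    · have hD : D ≠ 0 := by rintro hD; simp [hB, hD] at hdet
      positivity
    · positivity
  have hform := mul_sq_add_sq_eq_sheared (A := A) (C := C) hBD.ne' c
  obtain ⟨y₁, y₂, hz₁, hz₂⟩ : ∃ y₁ y₂, z₁ = A * y₁ + B * y₂ ∧ z₂ = C * y₁ + D * y₂ :=
    ⟨(D * z₁ - B * z₂) / (A * D - B * C), (A * z₂ - C * z₁) / (A * D - B * C),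
      by rw [mul_div_assoc', mul_div_assoc', ← add_div, eq_div_iff hdet]; ring,
      by rw [mul_div_assoc', mul_div_assoc', ← add_div, eq_div_iff hdet]; ring⟩
  calc _ = ∑' n : ℤ × ℤ, rexp (-(c * (A * D - B * C) ^ 2 / (B ^ 2 + D ^ 2) * (n.1 + y₁) ^ 2 +
          c * (B ^ 2 + D ^ 2) * (n.2 + y₂ + (A * B + C * D) / (B ^ 2 + D ^ 2) * (n.1 + y₁)) ^ 2)) :=
        tsum_congr fun n => by rw [hz₁, hz₂, ← hform, neg_mul]; ring_nf
    _ ≤ _ := tsum_exp_neg_sheared_le (by positivity)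
        (div_pos (mul_pos hc (pow_two_pos_of_ne_zero hdet)) hBD) _ _ _
    _ = _ := tsum_congr fun n => by rw [neg_mul, hform]

lemma latticePt_eq (M : Matrix (Fin 2) (Fin 2) ℝ) (n : ℤ × ℤ) :
    latticePt M n = (M 0 0 * n.1 + M 0 1 * n.2, M 1 0 * n.1 + M 1 1 * n.2) := by
  simp [latticePt, Matrix.mulVec, dotProduct, Fin.sum_univ_two]

/-- for a lattice `Λ = Mℤ²` in `ℝ²`, every `c > 0` and every `z ∈ ℝ²`,
`Σ_{λ∈Λ} e^{−c‖λ+z‖²} ≤ Σ_{λ∈Λ} e^{−c‖λ‖²}` (Euclidean norm): the periodized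
Gaussian, i.e. the heat kernel on `ℝ²/Λ`, is maximal at the lattice points. -/
theorem heat_kernel_max_at_lattice_points
    (M : Matrix (Fin 2) (Fin 2) ℝ) (hM : IsUnit M.det) (c : ℝ) (hc : 0 < c)
    (z : ℝ × ℝ) :
    ∑' n : ℤ × ℤ, Real.exp (-c *
        (((latticePt M n).1 + z.1) ^ 2 + ((latticePt M n).2 + z.2) ^ 2)) ≤
      ∑' n : ℤ × ℤ, Real.exp (-c *
        ((latticePt M n).1 ^ 2 + (latticePt M n).2 ^ 2)) := by
  have hdet : M 0 0 * M 1 1 - M 0 1 * M 1 0 ≠ 0 := by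
    simpa [Matrix.det_fin_two] using hM.ne_zero
  simpa only [latticePt_eq] using tsum_exp_neg_mul_sq_add_sq_add_le hdet hc z.1 z.2

end
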